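/- arXiv:2605.20383 — 5 statements merged into one kernel-verified Lean document; each statement's English description precedes it below -/
import Mathlib

section
/- Right multiplication by an affine simple reflection preserves the discrepancy Δ_b(w) = #{t ≤ b : w(t) > a} − #{t > b : w(t) ≤ a}. That is, if s_r is the affine simple reflection acting by swapping values at positions p and p+1 for all p ≡ r (mod n), then Δ_b(w s_r) = Δ_b(w) for every w ∈ S̃_n and all integers a, b. -/
/-!
Write `Δ_b(v)` for the discrepancy of `v` at the threshold `a`. Moving `b` to `b + 1` moves the
point `b + 1` from the right-hand set to the left-hand one, whichever side of `a` its value lies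
on, so `Δ_{b+1}(v) = Δ_b(v) + 1` as soon as `v` has bounded displacement. If `b ≢ r (mod n)`,
then `s_r` preserves `{t ≤ b}` and `{t > b}`, and reindexing by the involution `s_r` gives
`Δ_b(w s_r) = Δ_b(w)`. Of `b` and `b + 1` at least one is `≢ r`, and the shift rule transfers
the equality from it to `b`.
-/

structure IsAffineSimpleReflection (n r : ℤ) (s : ℤ → ℤ) : Prop where
  swap : ∀ p : ℤ, p % n = r → s p = p + 1 ∧ s (p + 1) = p
  fix : ∀ q : ℤ, q % n ≠ r → (q - 1) % n ≠ r → s q = q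

namespace IsAffineSimpleReflection

variable {n r : ℤ} {s : ℤ → ℤ}

theorem cases (h : IsAffineSimpleReflection n r s) (t : ℤ) :
    (t % n = r ∧ s t = t + 1) ∨ ((t - 1) % n = r ∧ s t = t - 1) ∨ s t = t := by
  by_cases h₁ : t % n = r
  · exact Or.inl ⟨h₁, (h.swap t h₁).1⟩
  by_cases h₂ : (t - 1) % n = r
  · refine Or.inr (Or.inl ⟨h₂, ?_⟩)
    simpa using (h.swap (t - 1) h₂).2
  · exact Or.inr (Or.inr (h.fix t h₁ h₂))

theorem involutive (h : IsAffineSimpleReflection n r s) : Function.Involutive s := by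
  intro t
  rcases h.cases t with ⟨ht, hst⟩ | ⟨ht, hst⟩ | hst
  · rw [hst, (h.swap t ht).2]
  · have := (h.swap (t - 1) ht).1
    rw [hst, this, sub_add_cancel]
  · rw [hst, hst]

theorem abs_sub_le_one (h : IsAffineSimpleReflection n r s) (t : ℤ) : |s t - t| ≤ 1 := by
  rw [abs_le]
  rcases h.cases t with ⟨-, hst⟩ | ⟨-, hst⟩ | hst <;> omega

theorem le_iff_le {b : ℤ} (h : IsAffineSimpleReflection n r s) (hb : b % n ≠ r) (t : ℤ) :
    s t ≤ b ↔ t ≤ b := by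
  rcases h.cases t with ⟨ht, hst⟩ | ⟨ht, hst⟩ | hst
  · have : t ≠ b := by rintro rfl; exact hb ht
    omega
  · have : t - 1 ≠ b := by rintro rfl; exact hb ht
    omega
  · rw [hst]

/-- Two consecutive integers cannot both be `≡ r`, since `s` would send `b + 1` to both `b` and
`b + 2`; this also covers `n = 1`. -/
theorem emod_ne_or_add_one_emod_ne (h : IsAffineSimpleReflection n r s) (b : ℤ) :
    b % n ≠ r ∨ (b + 1) % n ≠ r := by
  by_contra! hb
  have h₁ := (h.swap b hb.1).2
  have h₂ := (h.swap (b + 1) hb.2).1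
  omega

end IsAffineSimpleReflection

theorem exists_abs_sub_le_of_map_add {w : ℤ → ℤ} {n : ℤ} (hn : 0 < n)
    (hper : ∀ t : ℤ, w (t + n) = w t + n) : ∃ M : ℤ, ∀ t : ℤ, |w t - t| ≤ M := by
  have hperiodic : Function.Periodic (fun t => w t - t) n := fun t => by
    simp only [hper]
    ring
  obtain ⟨M, hM⟩ := ((Set.finite_Ico 0 n).image (fun t => |w t - t|)).bddAbove
  refine ⟨M, fun t => ?_⟩
  obtain ⟨y, hy, hty⟩ := hperiodic.exists_mem_Ico₀ hn t
  rw [show w t - t = w y - y from hty]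
  exact hM (Set.mem_image_of_mem _ hy)

theorem ncard_setOf_and_comp_of_involutive {α : Type*} {s : α → α} (hs : Function.Involutive s)
    {P : α → Prop} (hP : ∀ t, P (s t) ↔ P t) (Q : α → Prop) :
    {t | P t ∧ Q (s t)}.ncard = {t | P t ∧ Q t}.ncard := by
  rw [← Set.ncard_preimage_of_injective_subset_range (s := {t | P t ∧ Q t}) hs.injective
    fun t _ => hs.surjective t]
  congr 1
  ext t
  simp only [Set.preimage_ofPred_eq, hP]

noncomputable def discrepancy (v : ℤ → ℤ) (a b : ℤ) : ℤ :=
  ({t : ℤ | t ≤ b ∧ a < v t}.ncard : ℤ) - ({t : ℤ | b < t ∧ v t ≤ a}.ncard : ℤ)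

section discrepancy

variable {v : ℤ → ℤ} {M : ℤ}

theorem finite_setOf_le_and_lt (hv : ∀ t, |v t - t| ≤ M) (a b : ℤ) :
    {t : ℤ | t ≤ b ∧ a < v t}.Finite := by
  refine (Set.finite_Icc (a - M) b).subset fun t ⟨htb, hat⟩ => ?_
  have := abs_le.mp (hv t)
  exact ⟨by omega, htb⟩

theorem finite_setOf_lt_and_le (hv : ∀ t, |v t - t| ≤ M) (a b : ℤ) :
    {t : ℤ | b < t ∧ v t ≤ a}.Finite := by
  refine (Set.finite_Icc b (a + M)).subset fun t ⟨hbt, hta⟩ => ?_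
  have := abs_le.mp (hv t)
  exact ⟨hbt.le, by omega⟩

theorem discrepancy_add_one (hv : ∀ t, |v t - t| ≤ M) (a b : ℤ) :
    discrepancy v a (b + 1) = discrepancy v a b + 1 := by
  unfold discrepancy
  by_cases hab : a < v (b + 1)
  · have hleft : {t : ℤ | t ≤ b + 1 ∧ a < v t} = insert (b + 1) {t | t ≤ b ∧ a < v t} := by
      ext t; simp only [Set.mem_insert_iff, Set.mem_ofPred_eq]; grind
    have hright : {t : ℤ | b < t ∧ v t ≤ a} = {t | b + 1 < t ∧ v t ≤ a} := by
      ext t; simp only [Set.mem_ofPred_eq]; grind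
    rw [hleft, hright, Set.ncard_insert_of_notMem (by simp) (finite_setOf_le_and_lt hv a b)]
    push_cast
    ring
  · have hleft : {t : ℤ | t ≤ b + 1 ∧ a < v t} = {t | t ≤ b ∧ a < v t} := by
      ext t; simp only [Set.mem_ofPred_eq]; grind
    have hright : {t : ℤ | b < t ∧ v t ≤ a} = insert (b + 1) {t | b + 1 < t ∧ v t ≤ a} := by
      ext t; simp only [Set.mem_insert_iff, Set.mem_ofPred_eq]; grind
    rw [hleft, hright, Set.ncard_insert_of_notMem (by simp)
      (finite_setOf_lt_and_le hv a (b + 1))]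
    push_cast
    ring

theorem discrepancy_comp_of_involutive {s : ℤ → ℤ} (hs : Function.Involutive s) {b : ℤ}
    (hsb : ∀ t, s t ≤ b ↔ t ≤ b) (a : ℤ) : discrepancy (v ∘ s) a b = discrepancy v a b := by
  have hsb' (t : ℤ) : b < s t ↔ b < t := by simpa only [not_le] using (hsb t).not
  have hleft := ncard_setOf_and_comp_of_involutive hs (P := (· ≤ b)) hsb (fun u => a < v u)
  have hright := ncard_setOf_and_comp_of_involutive hs (P := (b < ·)) hsb' (fun u => v u ≤ a)
  unfold discrepancy
  simp only [Function.comp_apply] at hleft hright ⊢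
  rw [hleft, hright]

end discrepancy

theorem stmt2_general (n : ℕ) (hn : 1 ≤ n) (w : ℤ → ℤ)
    (hper : ∀ t : ℤ, w (t + n) = w t + n)
    (r : ℤ)
    (s : ℤ → ℤ)
    (hs1 : ∀ p : ℤ, p % n = r → s p = p + 1 ∧ s (p + 1) = p)
    (hs2 : ∀ q : ℤ, q % n ≠ r → (q - 1) % n ≠ r → s q = q)
    (a b : ℤ) :
    ({t : ℤ | t ≤ b ∧ a < (w ∘ s) t}.ncard : ℤ)
      - ({t : ℤ | b < t ∧ (w ∘ s) t ≤ a}.ncard : ℤ)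
    = ({t : ℤ | t ≤ b ∧ a < w t}.ncard : ℤ)
      - ({t : ℤ | b < t ∧ w t ≤ a}.ncard : ℤ) := by
  have hs : IsAffineSimpleReflection n r s := ⟨hs1, hs2⟩
  obtain ⟨M, hM⟩ := exists_abs_sub_le_of_map_add (by omega) hper
  have hMs (t : ℤ) : |(w ∘ s) t - t| ≤ M + 1 :=
    (abs_sub_le _ (s t) _).trans (add_le_add (hM (s t)) (hs.abs_sub_le_one t))
  change discrepancy (w ∘ s) a b = discrepancy w a b
  rcases hs.emod_ne_or_add_one_emod_ne b with hb | hb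
  · exact discrepancy_comp_of_involutive hs.involutive (hs.le_iff_le hb) a
  · have hcomp := discrepancy_comp_of_involutive (v := w) hs.involutive (hs.le_iff_le hb) a
    linarith [discrepancy_add_one hMs a b, discrepancy_add_one hM a b]

/-- Right multiplication by an affine simple reflection `s_r` preserves the
discrepancy `Δ_b(w) = #{t ≤ b : w t > a} − #{t > b : w t ≤ a}`. -/
theorem stmt2 (n : ℕ) (hn : 1 ≤ n) (w : ℤ → ℤ)
    (hbij : Function.Bijective w)
    (hper : ∀ t : ℤ, w (t + n) = w t + n)
    (r : ℤ) (hr0 : 0 ≤ r) (hrn : r < n)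
    (s : ℤ → ℤ)
    (hs1 : ∀ p : ℤ, p % n = r → s p = p + 1 ∧ s (p + 1) = p)
    (hs2 : ∀ q : ℤ, q % n ≠ r → (q - 1) % n ≠ r → s q = q)
    (a b : ℤ) :
    ({t : ℤ | t ≤ b ∧ a < (w ∘ s) t}.ncard : ℤ)
      - ({t : ℤ | b < t ∧ (w ∘ s) t ≤ a}.ncard : ℤ)
    = ({t : ℤ | t ≤ b ∧ a < w t}.ncard : ℤ)
      - ({t : ℤ | b < t ∧ w t ≤ a}.ncard : ℤ) :=
  stmt2_general n hn w hper r s hs1 hs2 a b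
end

section
/- The Fomin–Schur raising and lowering operators on partitions satisfy d_1 ∘ u_1 = id, d_j ∘ u_i = u_i ∘ d_j for i ≠ j, and d_{i+1} ∘ u_{i+1} = u_i ∘ d_i (as partial maps on the set of partitions extended by a zero element ∅). -/
open scoped Classical

/-- A partition as a weakly decreasing, eventually-zero function `ℕ → ℕ`
(row `i+1` of the partition is `f i`). -/
def IsPartitionFn (f : ℕ → ℕ) : Prop :=
  (∀ ⦃i j : ℕ⦄, i ≤ j → f j ≤ f i) ∧ ∃ N, ∀ k, N ≤ k → f k = 0

def PartitionFn := {f : ℕ → ℕ // IsPartitionFn f}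

/-- Add a box at the end of row `i` (rows indexed from 0). -/
def addBoxFn (f : ℕ → ℕ) (i : ℕ) : ℕ → ℕ := Function.update f i (f i + 1)

/-- Remove a box from the end of row `i` (rows indexed from 0). -/
def removeBoxFn (f : ℕ → ℕ) (i : ℕ) : ℕ → ℕ := Function.update f i (f i - 1)

/-- Fomin's raising operator `u_i` on partitions extended by a zero element
(`none` is the formal zero). -/
noncomputable def uOp (i : ℕ) : Option PartitionFn → Option PartitionFn :=
  fun x => x.bind fun p =>
    if h : IsPartitionFn (addBoxFn p.1 i) then some ⟨_, h⟩ else none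

/-- Fomin's lowering operator `d_i` on partitions extended by a zero element. -/
noncomputable def dOp (i : ℕ) : Option PartitionFn → Option PartitionFn :=
  fun x => x.bind fun p =>
    if h : 0 < p.1 i ∧ IsPartitionFn (removeBoxFn p.1 i) then some ⟨_, h.2⟩ else none

/-!
Each side of each relation sends a partition `λ` either to the zero element or to the same
function (`λ` itself, or `λ + eᵢ - eⱼ`), so only the domains of definition need comparing.
A box can be added to row `i` iff `i = 0` or row `i` is shorter than row `i - 1`, and removed
from row `i` iff row `i + 1` is shorter than row `i`. For `i ≠ j`, if both `λ` and
`μ = λ + eᵢ - eⱼ` are partitions, then so are `λ + eᵢ = λ ⊔ μ` and `λ - eⱼ = λ ⊓ μ`,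
because partitions are closed under pointwise maximum and minimum.
-/

open Function

theorem antitone_update_iff {β : Type*} [Preorder β] {f : ℕ → β} (hf : Antitone f) (i : ℕ)
    (v : β) : Antitone (update f i v) ↔ f (i + 1) ≤ v ∧ ∀ k, k + 1 = i → v ≤ f k := by
  constructor
  · intro hg
    refine ⟨?_, fun k hk => ?_⟩
    · simpa using hg (Nat.le_succ i)
    · simpa [update_of_ne (show k ≠ i by omega)] using hg (show k ≤ i by omega)
  · rintro ⟨hi, hpred⟩
    refine antitone_nat_of_succ_le fun n => ?_
    by_cases hn : n = i
    · subst hn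
      simpa using hi
    by_cases hn' : n + 1 = i
    · subst hn'
      simpa [update_of_ne hn] using hpred n rfl
    · simpa [update_of_ne hn, update_of_ne hn'] using hf (Nat.le_succ n)

namespace IsPartitionFn

variable {f g : ℕ → ℕ}

theorem antitone (hf : IsPartitionFn f) : Antitone f := hf.1

theorem of_antitone_of_eventually_le (hg : Antitone g) (hf : IsPartitionFn f) (N : ℕ)
    (hle : ∀ k, N ≤ k → g k ≤ f k) : IsPartitionFn g := by
  obtain ⟨M, hM⟩ := hf.2
  exact ⟨hg, max N M, fun k hk => by
    have := hle k (le_of_max_le_left hk)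
    rw [hM k (le_of_max_le_right hk)] at this
    omega⟩

theorem sup (hf : IsPartitionFn f) (hg : IsPartitionFn g) : IsPartitionFn (f ⊔ g) := by
  obtain ⟨N, hN⟩ := hg.2
  refine of_antitone_of_eventually_le (hf.antitone.sup hg.antitone) hf N fun k hk => ?_
  simp [hN k hk]

theorem inf (hf : IsPartitionFn f) (hg : IsPartitionFn g) : IsPartitionFn (f ⊓ g) :=
  of_antitone_of_eventually_le (hf.antitone.inf hg.antitone) hf 0 fun _ _ => inf_le_left

theorem update_iff (hf : IsPartitionFn f) (i v : ℕ) :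
    IsPartitionFn (update f i v) ↔ Antitone (update f i v) :=
  ⟨antitone, fun h => of_antitone_of_eventually_le h hf (i + 1) fun k hk => by
    rw [update_of_ne (show k ≠ i by omega)]⟩

end IsPartitionFn

section Boxes

variable {f : ℕ → ℕ} {i j : ℕ}

theorem isPartitionFn_addBoxFn_iff (hf : IsPartitionFn f) :
    IsPartitionFn (addBoxFn f i) ↔ ∀ k, k + 1 = i → f i < f k := by
  rw [addBoxFn, hf.update_iff, antitone_update_iff hf.antitone]
  exact ⟨fun h => h.2, fun h => ⟨(hf.antitone (Nat.le_succ i)).trans (Nat.le_succ _), h⟩⟩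

theorem isPartitionFn_addBoxFn_zero (hf : IsPartitionFn f) : IsPartitionFn (addBoxFn f 0) :=
  (isPartitionFn_addBoxFn_iff hf).2 fun _ hk => absurd hk (Nat.succ_ne_zero _)

theorem isPartitionFn_addBoxFn_succ_iff (hf : IsPartitionFn f) :
    IsPartitionFn (addBoxFn f (i + 1)) ↔ f (i + 1) < f i := by
  simp [isPartitionFn_addBoxFn_iff hf]

theorem pos_and_isPartitionFn_removeBoxFn_iff (hf : IsPartitionFn f) :
    0 < f i ∧ IsPartitionFn (removeBoxFn f i) ↔ f (i + 1) < f i := by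
  rw [removeBoxFn, hf.update_iff, antitone_update_iff hf.antitone]
  have hpred : ∀ k, k + 1 = i → f i - 1 ≤ f k := fun k hk =>
    (Nat.sub_le _ _).trans (hf.antitone (show k ≤ i by omega))
  constructor
  · rintro ⟨hpos, h, -⟩
    omega
  · intro h
    exact ⟨by omega, by omega, hpred⟩

theorem removeBoxFn_addBoxFn (f : ℕ → ℕ) (i : ℕ) : removeBoxFn (addBoxFn f i) i = f := by
  simp [removeBoxFn, addBoxFn]

theorem addBoxFn_removeBoxFn (h : 0 < f i) : addBoxFn (removeBoxFn f i) i = f := by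
  simp [removeBoxFn, addBoxFn, Nat.sub_add_cancel h]

theorem addBoxFn_apply_of_ne (h : j ≠ i) : addBoxFn f i j = f j := update_of_ne h _ _

theorem removeBoxFn_addBoxFn_comm (hij : i ≠ j) :
    removeBoxFn (addBoxFn f i) j = addBoxFn (removeBoxFn f j) i := by
  simp only [removeBoxFn, addBoxFn, update_of_ne hij, update_of_ne hij.symm]
  exact update_comm hij _ _ f

theorem addBoxFn_eq_sup (hij : i ≠ j) : addBoxFn f i = f ⊔ addBoxFn (removeBoxFn f j) i := by
  funext k
  simp only [addBoxFn, removeBoxFn, Pi.sup_apply, update_apply]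
  split_ifs <;> simp_all

theorem removeBoxFn_eq_inf (hij : i ≠ j) :
    removeBoxFn f j = f ⊓ addBoxFn (removeBoxFn f j) i := by
  funext k
  simp only [addBoxFn, removeBoxFn, Pi.inf_apply, update_apply]
  split_ifs <;> simp_all

end Boxes

@[ext]
theorem PartitionFn.ext {p q : PartitionFn} (h : p.1 = q.1) : p = q := Subtype.ext h

theorem PartitionFn.exists_val_eq_and {g : ℕ → ℕ} {P : (ℕ → ℕ) → Prop} :
    (∃ r : PartitionFn, r.1 = g ∧ P r.1) ↔ IsPartitionFn g ∧ P g :=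
  ⟨fun ⟨r, hr, h⟩ => hr ▸ ⟨r.2, h⟩, fun ⟨hg, h⟩ => ⟨⟨g, hg⟩, rfl, h⟩⟩

theorem funext_option_of_mem_some {α β : Type*} {F G : Option α → Option β}
    (hF : F none = none) (hG : G none = none) (h : ∀ a b, b ∈ F (some a) ↔ b ∈ G (some a)) :
    F = G := by
  funext x
  cases x with
  | none => rw [hF, hG]
  | some a => exact Option.ext (h a)

section Operators

variable {i j : ℕ} {x : Option PartitionFn} {p q : PartitionFn}

theorem mem_uOp : q ∈ uOp i x ↔ ∃ p ∈ x, q.1 = addBoxFn p.1 i := by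
  simp only [uOp, Option.mem_bind_iff]
  refine exists_congr fun p => and_congr_right fun _ => ?_
  split_ifs with h
  · exact Option.mem_some_iff.trans (PartitionFn.ext_iff.trans eq_comm)
  · exact ⟨fun h' => (nomatch h'), fun hq => absurd (hq ▸ q.2) h⟩

theorem mem_dOp : q ∈ dOp i x ↔ ∃ p ∈ x, 0 < p.1 i ∧ q.1 = removeBoxFn p.1 i := by
  simp only [dOp, Option.mem_bind_iff]
  refine exists_congr fun p => and_congr_right fun _ => ?_
  split_ifs with h
  · exact Option.mem_some_iff.trans
      ((PartitionFn.ext_iff.trans eq_comm).trans (and_iff_right h.1).symm)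
  · exact ⟨fun h' => (nomatch h'), fun ⟨hpos, hq⟩ => absurd ⟨hpos, hq ▸ q.2⟩ h⟩

theorem mem_dOp_uOp_some :
    q ∈ dOp j (uOp i (some p)) ↔
      IsPartitionFn (addBoxFn p.1 i) ∧ 0 < addBoxFn p.1 i j ∧
        q.1 = removeBoxFn (addBoxFn p.1 i) j := by
  simp only [mem_dOp, mem_uOp, Option.mem_some_iff, exists_eq_left']
  exact PartitionFn.exists_val_eq_and (P := fun g => 0 < g j ∧ q.1 = removeBoxFn g j)

theorem mem_uOp_dOp_some :
    q ∈ uOp i (dOp j (some p)) ↔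
      (0 < p.1 j ∧ IsPartitionFn (removeBoxFn p.1 j)) ∧
        q.1 = addBoxFn (removeBoxFn p.1 j) i := by
  simp only [mem_dOp, mem_uOp, Option.mem_some_iff, exists_eq_left', and_assoc,
    exists_and_left]
  exact and_congr_right fun _ =>
    PartitionFn.exists_val_eq_and (P := fun g => q.1 = addBoxFn g i)

end Operators

theorem dOp_zero_comp_uOp_zero : dOp 0 ∘ uOp 0 = id := by
  refine funext_option_of_mem_some rfl rfl fun p q => ?_
  rw [comp_apply, mem_dOp_uOp_some, removeBoxFn_addBoxFn, id, Option.mem_some_iff,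
    PartitionFn.ext_iff, eq_comm]
  exact ⟨fun h => h.2.2, fun h => ⟨isPartitionFn_addBoxFn_zero p.2, by simp [addBoxFn], h⟩⟩

theorem dOp_comp_uOp_of_ne {i j : ℕ} (hij : i ≠ j) : dOp j ∘ uOp i = uOp i ∘ dOp j := by
  refine funext_option_of_mem_some rfl rfl fun p q => ?_
  rw [comp_apply, comp_apply, mem_dOp_uOp_some, mem_uOp_dOp_some, addBoxFn_apply_of_ne hij.symm,
    removeBoxFn_addBoxFn_comm hij]
  constructor
  · rintro ⟨-, hj, hq⟩
    exact ⟨⟨hj, removeBoxFn_eq_inf hij ▸ p.2.inf (hq ▸ q.2)⟩, hq⟩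
  · rintro ⟨⟨hj, -⟩, hq⟩
    exact ⟨addBoxFn_eq_sup hij ▸ p.2.sup (hq ▸ q.2), hj, hq⟩

theorem dOp_succ_comp_uOp_succ (i : ℕ) : dOp (i + 1) ∘ uOp (i + 1) = uOp i ∘ dOp i := by
  refine funext_option_of_mem_some rfl rfl fun p q => ?_
  rw [comp_apply, comp_apply, mem_dOp_uOp_some, mem_uOp_dOp_some, removeBoxFn_addBoxFn,
    isPartitionFn_addBoxFn_succ_iff p.2, pos_and_isPartitionFn_removeBoxFn_iff p.2]
  constructor
  · rintro ⟨h, -, hq⟩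
    exact ⟨h, by rw [addBoxFn_removeBoxFn (Nat.zero_lt_of_lt h), hq]⟩
  · rintro ⟨h, hq⟩
    rw [addBoxFn_removeBoxFn (Nat.zero_lt_of_lt h)] at hq
    exact ⟨h, by simp [addBoxFn], hq⟩

/-- Relations of the Fomin–Schur operators: `d_1 u_1 = id`,
`d_j u_i = u_i d_j` for `i ≠ j`, and `d_{i+1} u_{i+1} = u_i d_i`
(rows indexed from 0 here, so row `1` is index `0`). -/
theorem stmt4 :
    dOp 0 ∘ uOp 0 = id ∧
    (∀ i j : ℕ, i ≠ j → dOp j ∘ uOp i = uOp i ∘ dOp j) ∧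
    (∀ i : ℕ, dOp (i + 1) ∘ uOp (i + 1) = uOp i ∘ dOp i) :=
  ⟨dOp_zero_comp_uOp_zero, fun _ _ => dOp_comp_uOp_of_ne, dOp_succ_comp_uOp_succ⟩
end

section
/- Let μ and μ' be compositions of n and suppose a sequence of compositions μ^N, μ^{N+1}, … satisfies that μ^{i+1} dominates μ^i for all i ≥ N (dominance: all partial sums of μ^{i+1} are ≥ those of μ^i). If the sequence takes only finitely many values and is eventually constant equal to some μ^m, and λ^i := λ^N + μ^N + ⋯ + μ^{i-1} is a partition for all i, then μ^m is a partition. -/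
open Finset

theorem antitone_of_forall_antitone_add_nsmul {α : Type*} [Preorder α] {f g : α → ℕ}
    (h : ∀ t : ℕ, Antitone (f + t • g)) : Antitone g := by
  intro i j hij
  by_contra! hlt
  have key : f j + (f i + 1) * g j ≤ f i + (f i + 1) * g i := h (f i + 1) hij
  have grow : (f i + 1) * (g i + 1) ≤ (f i + 1) * g j := Nat.mul_le_mul_left _ hlt
  nlinarith

theorem sum_Ico_add_eq_add_nsmul {M : Type*} [AddCommMonoid M] {μ : ℕ → M} {N m : ℕ}
    (hNm : N ≤ m) (hconst : ∀ i, m ≤ i → μ i = μ m) (t : ℕ) :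
    ∑ j ∈ Ico N (m + t), μ j = ∑ j ∈ Ico N m, μ j + t • μ m := by
  rw [← sum_Ico_consecutive _ hNm (Nat.le_add_right m t),
    sum_congr rfl fun j hj => hconst j (mem_Ico.mp hj).1, sum_const, Nat.card_Ico,
    Nat.add_sub_cancel_left]

theorem stmt9_general (N m : ℕ) (hNm : N ≤ m)
    (mu : ℕ → ℕ → ℕ) (lamN : ℕ → ℕ)
    (hconst : ∀ i, m ≤ i → mu i = mu m)
    (hpart : ∀ i, N ≤ i →
      IsPartitionFn (fun k => lamN k + ∑ j ∈ Finset.Ico N i, mu j k)) :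
    Antitone (mu m) := by
  refine antitone_of_forall_antitone_add_nsmul (f := lamN + ∑ j ∈ Ico N m, mu j) fun t => ?_
  have hlam : lamN + ∑ j ∈ Ico N m, mu j + t • mu m = lamN + ∑ j ∈ Ico N (m + t), mu j := by
    rw [sum_Ico_add_eq_add_nsmul hNm hconst, add_assoc]
  rw [hlam]
  intro i j hij
  simpa only [Pi.add_apply, Finset.sum_apply] using
    (hpart (m + t) (hNm.trans (Nat.le_add_right m t))).1 hij

/-- If a sequence of compositions `μ^N, μ^{N+1}, …` of `n` is increasing in
dominance order, eventually constant equal to `μ^m`, and all partial sums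
`λ^i = λ^N + μ^N + ⋯ + μ^{i-1}` are partitions, then `μ^m` is a partition. -/
theorem stmt9 (n : ℕ) (N m : ℕ) (hNm : N ≤ m)
    (mu : ℕ → ℕ → ℕ) (lamN : ℕ → ℕ)
    (hcomp : ∀ i, N ≤ i →
      ∃ K : ℕ, (∀ k, K ≤ k → mu i k = 0) ∧ ∑ k ∈ Finset.range K, mu i k = n)
    (hdom : ∀ i, N ≤ i → ∀ K : ℕ,
      ∑ k ∈ Finset.range K, mu i k ≤ ∑ k ∈ Finset.range K, mu (i + 1) k)
    (hconst : ∀ i, m ≤ i → mu i = mu m)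
    (hpart : ∀ i, N ≤ i →
      IsPartitionFn (fun k => lamN k + ∑ j ∈ Finset.Ico N i, mu j k)) :
    Antitone (mu m) :=
  stmt9_general N m hNm mu lamN hconst hpart
end

section
/- Let P be a skew standard Young tableau of shape μ/ν with entries 1,…,l, and let T be the sequence T_k = (column index of entry k in P). Fix a column value a appearing in T together with a+1. Then the number of cells of ν in column a minus the number of cells of ν in column a+1 is at least d(𝐚), where 𝐚 is the subsequence of T consisting of the letters a and a+1, and d is defined as: the smallest nonnegative integer d such that for every i > 0, the (d+i)-th occurrence of a+1 in 𝐚 (when it exists) is preceded by at least i occurrences of a. -/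
/-- `GoodSeq a l d` holds if for every `i > 0`, whenever the `(d+i)`-th
occurrence of `a+1` exists in `l`, there are at least `i` occurrences of `a`
strictly before it. -/
def GoodSeq (a : ℕ) (l : List ℕ) (d : ℕ) : Prop :=
  ∀ (p : ℕ) (hp : p < l.length), l.get ⟨p, hp⟩ = a + 1 →
    ((l.take p).count (a + 1) + 1) - d ≤ (l.take p).count a

/-!
Take `d = A - B`, where `A` and `B` are the lengths of columns `a` and `a + 1` of `ν`. If entry `k`
sits in cell `(r, a + 1)`, the earlier entries of column `a + 1` lie strictly above it, in rows
`B, …, r - 1`, so there are at most `r - B` of them. The cells `(r', a)` with `A ≤ r' ≤ r` all belong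
to `μ/ν` (as `μ_{r'} ≥ μ_r ≥ a + 1`) and hold entries smaller than `k`, so at least `r + 1 - A`
letters `a` precede `k`. Hence `A - B` satisfies `GoodSeq`, and `d(𝐚) ≤ A - B`.
-/

open Finset

namespace IsPartitionFn

variable {f : ℕ → ℕ} {c : ℕ}

theorem setOf_le_eq_Iio (hf : IsPartitionFn f) (hc : 0 < c) :
    {r | c ≤ f r} = Set.Iio {r | c ≤ f r}.ncard := by
  obtain ⟨N, hN⟩ := hf.2
  have hex : ∃ r, f r < c := ⟨N, by rw [hN N le_rfl]; exact hc⟩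
  have hIio : {r | c ≤ f r} = Set.Iio (Nat.find hex) := by
    ext r
    simp only [Set.mem_ofPred_eq, Set.mem_Iio, Nat.lt_find_iff, not_lt]
    exact ⟨fun h m hm => h.trans (hf.1 hm), fun h => h r le_rfl⟩
  rw [hIio, Set.ncard_Iio_nat]

theorem le_iff_lt_ncard (hf : IsPartitionFn f) (hc : 0 < c) (r : ℕ) :
    c ≤ f r ↔ r < {r | c ≤ f r}.ncard :=
  Set.ext_iff.1 (hf.setOf_le_eq_Iio hc) r

theorem ncard_setOf_le_anti (hf : IsPartitionFn f) (hc : 0 < c) {c' : ℕ} (hcc' : c ≤ c') :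
    {r | c' ≤ f r}.ncard ≤ {r | c ≤ f r}.ncard := by
  refine Set.ncard_le_ncard (fun r hr => hcc'.trans hr) ?_
  rw [hf.setOf_le_eq_Iio hc]
  exact Set.finite_Iio _

end IsPartitionFn

theorem GoodSeq.of_forall_eq_append {a d : ℕ} {w : List ℕ}
    (h : ∀ u v, w = u ++ (a + 1) :: v → u.count (a + 1) + 1 - d ≤ u.count a) :
    GoodSeq a w d := by
  intro p hp hval
  refine h _ (w.drop (p + 1)) ?_
  rw [← hval, List.get_eq_getElem, ← List.drop_eq_getElem_cons, List.take_append_drop]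

theorem List.exists_append_cons_of_filter_eq_append_cons {α : Type*} {p : α → Bool}
    {l u v : List α} {x : α} (h : l.filter p = u ++ x :: v) :
    ∃ u' v', l = u' ++ x :: v' ∧ u'.filter p = u := by
  obtain ⟨l₁, l₂, rfl, h₁, h₂⟩ := List.filter_eq_append_iff.1 h
  obtain ⟨m₁, m₂, rfl, hm₁, -, -⟩ := List.filter_eq_cons_iff.1 h₂
  refine ⟨l₁ ++ m₁, m₂, by simp, ?_⟩
  rw [List.filter_append, h₁, List.filter_eq_nil_iff.2 hm₁, List.append_nil]

section FinRange

variable {n : ℕ} {s t : List (Fin n)} {k : Fin n}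

theorem List.mem_iff_lt_of_finRange_eq_append_cons (h : List.finRange n = s ++ k :: t)
    (k' : Fin n) : k' ∈ s ↔ k' < k := by
  have hsorted := List.pairwise_lt_finRange n
  rw [h, List.pairwise_append, List.pairwise_cons] at hsorted
  refine ⟨fun hk' => hsorted.2.2 k' hk' k List.mem_cons_self, fun hlt => ?_⟩
  have hmem : k' ∈ s ++ k :: t := h ▸ List.mem_finRange k'
  rcases List.mem_append.1 hmem with hs | hkt
  · exact hs
  · rcases List.mem_cons.1 hkt with rfl | ht
    · exact absurd hlt (lt_irrefl _)
    · exact absurd (hsorted.2.1.1 k' ht) (not_lt.2 hlt.le)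

theorem List.count_map_of_finRange_eq_append_cons (h : List.finRange n = s ++ k :: t)
    (g : Fin n → ℕ) (y : ℕ) : (s.map g).count y = #{k' | k' < k ∧ g k' = y} := by
  have hnodup : s.Nodup := (List.nodup_append.1 (h ▸ List.nodup_finRange n)).1
  rw [List.count_eq_countP, List.countP_map, List.countP_eq_length_filter,
    ← List.toFinset_card_of_nodup (hnodup.filter _), List.toFinset_filter]
  congr 1
  ext k'
  simp [List.mem_iff_lt_of_finRange_eq_append_cons h]

end FinRange

theorem goodSeq_of_forall_earlier {l a d : ℕ} (g : Fin l → ℕ)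
    (h : ∀ k, g k = a + 1 →
      #{k' | k' < k ∧ g k' = a + 1} + 1 - d ≤ #{k' | k' < k ∧ g k' = a}) :
    GoodSeq a (((List.finRange l).map g).filter (fun c => decide (c = a ∨ c = a + 1))) d := by
  refine GoodSeq.of_forall_eq_append fun u v huv => ?_
  obtain ⟨u', v', hw, rfl⟩ := List.exists_append_cons_of_filter_eq_append_cons huv
  obtain ⟨s, t', hfin, rfl, ht'⟩ := List.map_eq_append_iff.1 hw
  obtain ⟨k, t, rfl, hk, -⟩ := List.map_eq_cons_iff.1 ht'
  rw [List.count_filter (by simp), List.count_filter (by simp),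
    List.count_map_of_finRange_eq_append_cons hfin, List.count_map_of_finRange_eq_append_cons hfin]
  exact h k hk

section Tableau

variable {l : ℕ} {nu muP : ℕ → ℕ} {pos : Fin l → ℕ × ℕ}

theorem card_earlier_in_column_add_ncard_le (hnu : IsPartitionFn nu)
    (hout : ∀ k, nu (pos k).1 < (pos k).2) (hinj : Function.Injective pos)
    (hcol : ∀ k k' : Fin l, (pos k).2 = (pos k').2 → (pos k).1 < (pos k').1 → k < k')
    (k : Fin l) :
    #{k' | k' < k ∧ (pos k').2 = (pos k).2} + {r | (pos k).2 ≤ nu r}.ncard ≤ (pos k).1 := by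
  set c := (pos k).2
  have hc : 0 < c := (Nat.zero_le _).trans_lt (hout k)
  have hrow_ge (k' : Fin l) (hk' : (pos k').2 = c) : {r | c ≤ nu r}.ncard ≤ (pos k').1 := by
    rw [← not_lt, ← hnu.le_iff_lt_ncard hc, not_le, ← hk']
    exact hout k'
  have hmaps : ∀ k' ∈ ({k' | k' < k ∧ (pos k').2 = c} : Finset (Fin l)),
      (pos k').1 ∈ Ico {r | c ≤ nu r}.ncard (pos k).1 := by
    intro k' hk'
    obtain ⟨hlt, hk'c⟩ := (mem_filter.1 hk').2
    refine mem_Ico.2 ⟨hrow_ge k' hk'c, lt_of_not_ge fun hge => ?_⟩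
    rcases hge.lt_or_eq with hgt | heq
    · exact (hcol k k' hk'c.symm hgt).not_gt hlt
    · exact hlt.ne (hinj (Prod.ext heq.symm hk'c))
  have hinjOn : Set.InjOn (fun k' => (pos k').1)
      ({k' | k' < k ∧ (pos k').2 = c} : Finset (Fin l)) := by
    intro k₁ h₁ k₂ h₂ heq
    exact hinj (Prod.ext heq ((mem_filter.1 h₁).2.2.trans (mem_filter.1 h₂).2.2.symm))
  have hcard := card_le_card_of_injOn _ hmaps hinjOn
  rw [Nat.card_Ico] at hcard
  have := hrow_ge k rfl
  omega

theorem lt_card_earlier_in_column_add_ncard (hnu : IsPartitionFn nu) (hmuP : IsPartitionFn muP)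
    (hcells : ∀ r c : ℕ, (nu r < c ∧ c ≤ muP r) ↔ ∃ k, pos k = (r, c))
    (hrow : ∀ k k' : Fin l, (pos k).1 = (pos k').1 → (pos k).2 < (pos k').2 → k < k')
    (hcol : ∀ k k' : Fin l, (pos k).2 = (pos k').2 → (pos k).1 < (pos k').1 → k < k')
    {k : Fin l} {c : ℕ} (hc : 0 < c) (hck : c < (pos k).2) :
    (pos k).1 < #{k' | k' < k ∧ (pos k').2 = c} + {r | c ≤ nu r}.ncard := by
  set r := (pos k).1
  have hcell (r' : ℕ) (hr' : r' ∈ Ico {r | c ≤ nu r}.ncard (r + 1)) : ∃ k', pos k' = (r', c) := by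
    obtain ⟨hA, hr⟩ := mem_Ico.1 hr'
    refine (hcells r' c).1 ⟨?_, hck.le.trans ?_⟩
    · rw [← not_le, hnu.le_iff_lt_ncard hc]
      exact hA.not_gt
    · exact ((hcells r _).2 ⟨k, rfl⟩).2.trans (hmuP.1 (Nat.lt_succ_iff.1 hr))
  have hsurj : Set.SurjOn (fun k' => (pos k').1)
      ({k' | k' < k ∧ (pos k').2 = c} : Finset (Fin l)) (Ico {r | c ≤ nu r}.ncard (r + 1)) := by
    have hbefore (k' : Fin l) (hk' : pos k' = (r, c)) : k' < k :=
      hrow k' k (by rw [hk']) (by rw [hk']; exact hck)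
    intro r' hr'
    obtain ⟨hA, hr'r⟩ := mem_Ico.1 hr'
    obtain ⟨k', hk'⟩ := hcell r' hr'
    refine ⟨k', mem_filter.2 ⟨mem_univ _, ?_, by rw [hk']⟩, by simp [hk']⟩
    rcases (Nat.lt_succ_iff.1 hr'r).lt_or_eq with hlt | rfl
    · obtain ⟨k₀, hk₀⟩ := hcell r (mem_Ico.2 ⟨hA.trans hlt.le, r.lt_succ_self⟩)
      exact (hcol k' k₀ (by rw [hk', hk₀]) (by rw [hk', hk₀]; exact hlt)).trans (hbefore k₀ hk₀)
    · exact hbefore k' hk'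
  have hcard := card_le_card_of_surjOn _ hsurj
  rw [Nat.card_Ico] at hcard
  omega

end Tableau

theorem stmt12_general (l : ℕ) (nu muP : ℕ → ℕ)
    (hnu : IsPartitionFn nu) (hmuP : IsPartitionFn muP)
    (pos : Fin l → ℕ × ℕ)
    (hcells : ∀ r c : ℕ, (nu r < c ∧ c ≤ muP r) ↔ ∃ k, pos k = (r, c))
    (hinj : Function.Injective pos)
    (hrow : ∀ k k' : Fin l, (pos k).1 = (pos k').1 → (pos k).2 < (pos k').2 → k < k')
    (hcol : ∀ k k' : Fin l, (pos k).2 = (pos k').2 → (pos k).1 < (pos k').1 → k < k')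
    (a : ℕ) (ha : 1 ≤ a) :
    {r : ℕ | a + 1 ≤ nu r}.ncard
      + sInf {d : ℕ | GoodSeq a
          (((List.finRange l).map (fun k => (pos k).2)).filter
            (fun c => decide (c = a ∨ c = a + 1))) d}
      ≤ {r : ℕ | a ≤ nu r}.ncard := by
  set w := ((List.finRange l).map (fun k => (pos k).2)).filter
    (fun c => decide (c = a ∨ c = a + 1))
  have hout (k : Fin l) : nu (pos k).1 < (pos k).2 := ((hcells _ _).2 ⟨k, rfl⟩).1
  have hgood : GoodSeq a w ({r : ℕ | a ≤ nu r}.ncard - {r : ℕ | a + 1 ≤ nu r}.ncard) := by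
    refine goodSeq_of_forall_earlier _ fun k hk => ?_
    have hupper := card_earlier_in_column_add_ncard_le hnu hout hinj hcol k
    have hlower := lt_card_earlier_in_column_add_ncard hnu hmuP hcells hrow hcol (k := k) ha
      (by rw [hk]; exact a.lt_succ_self)
    rw [hk] at hupper
    omega
  have hcols := hnu.ncard_setOf_le_anti ha (Nat.le_add_right a 1)
  calc _ ≤ {r : ℕ | a + 1 ≤ nu r}.ncard
        + ({r : ℕ | a ≤ nu r}.ncard - {r : ℕ | a + 1 ≤ nu r}.ncard) :=
        Nat.add_le_add_left (Nat.sInf_le hgood) _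
    _ ≤ {r : ℕ | a ≤ nu r}.ncard := by omega

/-- For a skew SYT of shape `μ/ν` (given by the positions `pos k = (row, col)`
of the entries `k = 1,…,l`, rows 0-indexed, columns 1-indexed), the number of
cells of `ν` in column `a` minus the number in column `a+1` is at least
`d(𝐚)`, where `𝐚` is the subsequence of the column reading word consisting of
the letters `a` and `a+1`. -/
theorem stmt12 (l : ℕ) (nu muP : ℕ → ℕ)
    (hnu : IsPartitionFn nu) (hmuP : IsPartitionFn muP)
    (pos : Fin l → ℕ × ℕ)
    (hcells : ∀ r c : ℕ, (nu r < c ∧ c ≤ muP r) ↔ ∃ k, pos k = (r, c))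
    (hinj : Function.Injective pos)
    (hrow : ∀ k k' : Fin l, (pos k).1 = (pos k').1 → (pos k).2 < (pos k').2 → k < k')
    (hcol : ∀ k k' : Fin l, (pos k).2 = (pos k').2 → (pos k).1 < (pos k').1 → k < k')
    (a : ℕ) (ha : 1 ≤ a)
    (hexa : ∃ k, (pos k).2 = a) (hexa1 : ∃ k, (pos k).2 = a + 1) :
    {r : ℕ | a + 1 ≤ nu r}.ncard
      + sInf {d : ℕ | GoodSeq a
          (((List.finRange l).map (fun k => (pos k).2)).filter
            (fun c => decide (c = a ∨ c = a + 1))) d}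
      ≤ {r : ℕ | a ≤ nu r}.ncard :=
  stmt12_general l nu muP hnu hmuP pos hcells hinj hrow hcol a ha
end

section
/- For w ∈ S̃_n with index i (∑_{j=1}^n (w(j)−j) = n·i), and for any integer m such that w(j) ≤ n(m−1) for all 1 ≤ j ≤ n (i.e., the m-th standard window is 'full'), we have #{j : j > n, w(j) ≤ n(m−1)} = n(m−2) − i. -/
/-!
Sort the indices `j > n` by their residue `r ∈ [1, n]`. Writing `j = r + k n`, periodicity gives
`w j = w r + k n`, so the residue `r` contributes the `k ∈ [1, ⌊(N - w r) / n⌋]`, where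
`N = n (m - 1)`; fullness of the window makes these floors nonnegative. Multiplied by `n`, their sum
is `∑ (N - w r)` minus the sum of the remainders `(N - w r) mod n`. An injective periodic `w`
permutes the residues mod `n`, so these remainders are `0, …, n - 1`, and the index
`∑ (w r - r) = n i` finishes the computation.
-/

open Finset

lemma sum_Ico_zero_add_sum_Icc_one (n : ℕ) :
    ∑ x ∈ Ico (0 : ℤ) n, x + ∑ r ∈ Icc (1 : ℤ) n, r = n ^ 2 := by
  induction n with
  | zero => simp
  | succ k ih =>
    push_cast
    rw [← insert_Ico_right_eq_Ico_add_one (by omega), ← insert_Icc_right_eq_Icc_add_one (by omega),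
      sum_insert (by simp), sum_insert (by simp)]
    linear_combination ih

lemma Int.eq_of_dvd_sub_of_mem_Icc {n r s : ℤ} (hr : r ∈ Icc 1 n) (hs : s ∈ Icc 1 n)
    (h : n ∣ r - s) : r = s := by
  rw [mem_Icc] at hr hs
  have := Int.eq_zero_of_abs_lt_dvd h (abs_lt.2 ⟨by omega, by omega⟩)
  omega

namespace AffinePerm

variable {n : ℕ} {w : ℤ → ℤ}

lemma map_add_mul (hper : ∀ j, w (j + n) = w j + n) (j k : ℤ) : w (j + k * n) = w j + k * n := by
  have hp : Function.Periodic (fun j => w j - j) (n : ℤ) := fun j => by simp only [hper]; ring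
  have := hp.int_mul k j
  simp only [Int.cast_id] at this
  linarith

lemma lt_and_map_le_iff (hper : ∀ j, w (j + n) = w j + n) (hn : (0 : ℤ) < n) (N : ℤ) {r : ℤ}
    (hr : r ∈ Icc 1 (n : ℤ)) (k : ℤ) :
    (n < r + k * n ∧ w (r + k * n) ≤ N) ↔ k ∈ Icc 1 ((N - w r) / n) := by
  rw [mem_Icc] at hr
  rw [map_add_mul hper, mem_Icc, Int.le_ediv_iff_mul_le hn]
  constructor
  · rintro ⟨hlt, hle⟩
    refine ⟨?_, by linarith⟩
    by_contra! hk
    nlinarith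
  · rintro ⟨hk, hle⟩
    exact ⟨by nlinarith, by linarith⟩

lemma setOf_lt_map_le_eq_biUnion (hper : ∀ j, w (j + n) = w j + n) (hn : (0 : ℤ) < n) (N : ℤ) :
    {j : ℤ | n < j ∧ w j ≤ N} =
      ↑((Icc 1 (n : ℤ)).biUnion fun r => (Icc 1 ((N - w r) / n)).image (r + · * n)) := by
  ext j
  simp only [Set.mem_ofPred_eq, coe_biUnion, Set.mem_iUnion, mem_coe, mem_image, exists_prop]
  constructor
  · intro hj
    have hr : (j - 1) % n + 1 ∈ Icc 1 (n : ℤ) := by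
      rw [mem_Icc]
      have := Int.emod_nonneg (j - 1) hn.ne'
      have := Int.emod_lt_of_pos (j - 1) hn
      omega
    have hdecomp : (j - 1) % n + 1 + (j - 1) / n * n = j := by
      linarith [Int.mul_ediv_add_emod (j - 1) n]
    refine ⟨_, hr, (j - 1) / n, ?_, hdecomp⟩
    rw [← lt_and_map_le_iff hper hn N hr, hdecomp]
    exact hj
  · rintro ⟨r, hr, k, hk, rfl⟩
    exact (lt_and_map_le_iff hper hn N hr k).2 hk

lemma ncard_setOf_lt_map_le (hper : ∀ j, w (j + n) = w j + n) (hn : (0 : ℤ) < n) (N : ℤ) :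
    {j : ℤ | n < j ∧ w j ≤ N}.ncard = ∑ r ∈ Icc 1 (n : ℤ), ((N - w r) / n).toNat := by
  rw [setOf_lt_map_le_eq_biUnion hper hn, Set.ncard_coe_finset, card_biUnion]
  · refine sum_congr rfl fun r _ => ?_
    rw [card_image_of_injective _ fun a b hab => ?_, Int.card_Icc, add_sub_cancel_right]
    exact mul_right_cancel₀ hn.ne' (add_left_cancel hab)
  · intro r hr s hs hne
    refine disjoint_left.2 fun j hjr hjs => hne ?_
    obtain ⟨k, -, rfl⟩ := mem_image.1 hjr
    obtain ⟨l, -, hl⟩ := mem_image.1 hjs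
    exact Int.eq_of_dvd_sub_of_mem_Icc hr hs ⟨l - k, by linarith⟩

lemma injOn_sub_map_emod (hper : ∀ j, w (j + n) = w j + n) (hinj : Function.Injective w) (N : ℤ) :
    Set.InjOn (fun r => (N - w r) % n) ↑(Icc 1 (n : ℤ)) := by
  intro r hr s hs hrs
  obtain ⟨t, ht⟩ : (n : ℤ) ∣ w s - w r := by
    simpa using Int.ModEq.dvd hrs.symm
  have : s = r + t * n := hinj (by rw [map_add_mul hper]; linarith)
  exact Int.eq_of_dvd_sub_of_mem_Icc hr hs ⟨-t, by linarith⟩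

lemma sum_sub_map_emod (hper : ∀ j, w (j + n) = w j + n) (hinj : Function.Injective w)
    (hn : (0 : ℤ) < n) (N : ℤ) :
    ∑ r ∈ Icc 1 (n : ℤ), (N - w r) % n = ∑ x ∈ Ico 0 (n : ℤ), x := by
  have hinjOn := injOn_sub_map_emod hper hinj N
  have himage : (Icc 1 (n : ℤ)).image (fun r => (N - w r) % n) = Ico 0 (n : ℤ) := by
    refine eq_of_subset_of_card_le (fun x hx => ?_) ?_
    · obtain ⟨r, -, rfl⟩ := mem_image.1 hx
      exact mem_Ico.2 ⟨Int.emod_nonneg _ hn.ne', Int.emod_lt_of_pos _ hn⟩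
    · rw [card_image_of_injOn hinjOn]
      simp
  rw [← himage, sum_image hinjOn]

lemma mul_sum_sub_map_ediv (hper : ∀ j, w (j + n) = w j + n) (hinj : Function.Injective w)
    (hn : (0 : ℤ) < n) (N : ℤ) :
    n * ∑ r ∈ Icc 1 (n : ℤ), (N - w r) / n = n * N - ∑ r ∈ Icc 1 (n : ℤ), (w r - r) - n ^ 2 := by
  have hdiv : ∀ r, n * ((N - w r) / n) = N - w r - (N - w r) % n := fun r => by
    linarith [Int.mul_ediv_add_emod (N - w r) n]
  rw [mul_sum, sum_congr rfl fun r _ => hdiv r, sum_sub_distrib, sum_sub_map_emod hper hinj hn,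
    sum_sub_distrib, sum_sub_distrib, sum_const, Int.card_Icc, add_sub_cancel_right, Int.toNat_natCast,
    nsmul_eq_mul]
  linear_combination -sum_Ico_zero_add_sum_Icc_one n

end AffinePerm

/-- If `w ∈ S̃ₙ` has index `i` and the `m`-th standard window is full
(`w j ≤ n(m-1)` for `1 ≤ j ≤ n`), then
`#{j > n : w j ≤ n(m-1)} = n(m-2) - i`. -/
theorem stmt15 (n : ℕ) (hn : 1 ≤ n) (w : ℤ → ℤ)
    (hbij : Function.Bijective w)
    (hper : ∀ j : ℤ, w (j + n) = w j + n)
    (i : ℤ) (hidx : ∑ j ∈ Finset.Icc (1 : ℤ) (n : ℤ), (w j - j) = n * i)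
    (m : ℤ) (hfull : ∀ j : ℤ, 1 ≤ j → j ≤ n → w j ≤ n * (m - 1)) :
    ({j : ℤ | (n : ℤ) < j ∧ w j ≤ n * (m - 1)}.ncard : ℤ) = n * (m - 2) - i := by
  have hn0 : (0 : ℤ) < n := by exact_mod_cast hn
  have hquot_nonneg : ∀ r ∈ Icc 1 (n : ℤ), 0 ≤ (n * (m - 1) - w r) / n := fun r hr =>
    Int.ediv_nonneg (sub_nonneg.2 (hfull r (mem_Icc.1 hr).1 (mem_Icc.1 hr).2)) hn0.le
  rw [AffinePerm.ncard_setOf_lt_map_le hper hn0, Nat.cast_sum,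
    sum_congr rfl fun r hr => Int.toNat_of_nonneg (hquot_nonneg r hr)]
  refine mul_left_cancel₀ hn0.ne' ?_
  rw [AffinePerm.mul_sum_sub_map_ediv hper hbij.injective hn0, hidx]
  ring
end
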